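/- For the path P_n (n ≥ 2) and any nonnegative integer k: if k < n − 1 then cfc(L^k(P_n)) = ⌈log₂(n − k)⌉. -/

import Mathlib

open SimpleGraph

universe u

/-- An edge coloring makes `G` conflict-free connected: every two distinct vertices are
joined by a path on which some color appears on exactly one edge. -/
def IsCFCColoring {V : Type u} (G : SimpleGraph V) (c : Sym2 V → ℕ) : Prop :=
  ∀ u v : V, u ≠ v → ∃ p : G.Walk u v, p.IsPath ∧
    ∃ color : ℕ, (p.edges.map c).count color = 1

/-- The conflict-free connection number: the least number of colors in a
conflict-free connection coloring. -/
noncomputable def cfcNum {V : Type u} (G : SimpleGraph V) : ℕ :=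
  sInf {n : ℕ | ∃ c : Sym2 V → ℕ, (∀ e ∈ G.edgeSet, c e < n) ∧ IsCFCColoring G c}

/-- The line graph of `G`. -/
def lineG {V : Type u} (G : SimpleGraph V) : SimpleGraph G.edgeSet where
  Adj e f := e ≠ f ∧ ∃ v : V, v ∈ (e : Sym2 V) ∧ v ∈ (f : Sym2 V)
  symm := ⟨by rintro e f ⟨h, v, hv, hw⟩; exact ⟨h.symm, v, hw, hv⟩⟩
  loopless := ⟨by rintro e ⟨h, _⟩; exact h rfl⟩

/-- The `k`-iterated line graph, as a bundled pair (vertex type, graph). -/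
def iterLine {V : Type u} (G : SimpleGraph V) : ℕ → (W : Type u) × SimpleGraph W
  | 0 => ⟨V, G⟩
  | n + 1 => ⟨(iterLine G n).2.edgeSet, lineG (iterLine G n).2⟩

/-- The subgraph of `G` induced by the set of cut-edges (bridges) of `G`. -/
def cutG {V : Type u} (G : SimpleGraph V) : SimpleGraph V :=
  SimpleGraph.fromEdgeSet {e | G.IsBridge e}

/-- `h(G)`: the maximum of `cfcNum(K)` over connected components `K` of `C(G)`. -/
noncomputable def hG {V : Type u} (G : SimpleGraph V) : ℕ :=
  sSup (Set.range fun K : (cutG G).ConnectedComponent => cfcNum ((cutG G).induce K.supp))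

/-- `G` is claw-free: no induced `K_{1,3}`. -/
def ClawFree {V : Type u} (G : SimpleGraph V) : Prop :=
  ∀ v a b c : V, G.Adj v a → G.Adj v b → G.Adj v c →
    a ≠ b → a ≠ c → b ≠ c → ¬G.Adj a b → ¬G.Adj a c → ¬G.Adj b c → False

/-- `G` has no cut vertex: deleting any vertex leaves a connected graph. -/
def NoCutVertex {V : Type u} (G : SimpleGraph V) : Prop :=
  ∀ v : V, (G.induce {w | w ≠ v}).Connected

/-- `B` is a block of `G`: a maximal vertex set inducing a connected subgraph
without cut vertices. -/
def IsBlock {V : Type u} (G : SimpleGraph V) (B : Set V) : Prop :=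
  (G.induce B).Connected ∧ NoCutVertex (G.induce B) ∧
    ∀ B' : Set V, B ⊆ B' → (G.induce B').Connected → NoCutVertex (G.induce B') → B' = B

/-- Every component of `C(G)` is a cut-path of `G`: `C(G)` is a linear forest
(acyclic with maximum degree at most 2) and every internal vertex (degree-2 vertex
of `C(G)`) has degree 2 in `G`. -/
def CutPathCondition {V : Type u} (G : SimpleGraph V) : Prop :=
  (cutG G).IsAcyclic ∧ (∀ v : V, ((cutG G).neighborSet v).ncard ≤ 2) ∧
    ∀ v : V, ((cutG G).neighborSet v).ncard = 2 → (G.neighborSet v).ncard = 2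

/-!
The line graph of `P_m` is `P_(m-1)` and the conflict-free connection number is an isomorphism
invariant, so `L^k(P_n) ≅ P_(n-k)` reduces the claim to `cfc(P_m) = ⌈log₂ m⌉`. In `P_m` the only
path between two vertices runs along the interval between them, so a colouring is conflict-free
exactly when its sequence of edge colours has, on every nonempty window, a colour occurring once.
Such a sequence with `s` colours has length below `2^s`: the colour occurring once in the whole
sequence splits it into two shorter sequences avoiding that colour. Conversely, colouring the
`i`-th edge by the 2-adic valuation of `i + 1` works, since between two numbers of equal
valuation lies one of larger valuation.
-/

open Finset

section Isomorphism

variable {V W : Type u} {G : SimpleGraph V} {H : SimpleGraph W}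

lemma IsCFCColoring.comap (φ : G ≃g H) {c : Sym2 W → ℕ} (hc : IsCFCColoring H c) :
    IsCFCColoring G (c ∘ Sym2.map φ) := by
  intro u v huv
  obtain ⟨p, hp, color, hcount⟩ := hc (φ u) (φ v) (φ.injective.ne huv)
  refine ⟨(p.map φ.symm.toHom).copy (φ.symm_apply_apply u) (φ.symm_apply_apply v),
    (Walk.isPath_copy _ _ _).2 (hp.map φ.symm.injective), color, ?_⟩
  simpa [Walk.edges_map, Sym2.map_map, Function.comp_def] using hcount

lemma cfcNum_congr (φ : G ≃g H) : cfcNum G = cfcNum H := by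
  have transfer : ∀ {V W : Type u} {G : SimpleGraph V} {H : SimpleGraph W} (ψ : G ≃g H) (t : ℕ),
      (∃ c, (∀ e ∈ H.edgeSet, c e < t) ∧ IsCFCColoring H c) →
      ∃ c, (∀ e ∈ G.edgeSet, c e < t) ∧ IsCFCColoring G c :=
    fun ψ _ ⟨c, hlt, hc⟩ =>
      ⟨c ∘ Sym2.map ψ, fun _ he => hlt _ (ψ.map_mem_edgeSet_iff.2 he), hc.comap ψ⟩
  unfold cfcNum
  congr 1
  ext t
  exact ⟨transfer φ.symm t, transfer φ t⟩

def SimpleGraph.Iso.lineG (φ : G ≃g H) : lineG G ≃g lineG H where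
  toEquiv := φ.mapEdgeSet
  map_rel_iff' := by
    simp [_root_.lineG, Iso.mapEdgeSet, Hom.mapEdgeSet, Sym2.mem_map, Subtype.ext_iff,
      (Sym2.map.injective φ.injective).eq_iff]

end Isomorphism

section ConflictFreeSequence

def IsConflictFreeOn (g : ℕ → ℕ) (a b : ℕ) : Prop :=
  ∀ u v, a ≤ u → u < v → v ≤ b → ∃ c, #{i ∈ Ico u v | g i = c} = 1

lemma count_map_range'_eq_card_filter_Ico (g : ℕ → ℕ) (u v c : ℕ) :
    ((List.range' u (v - u)).map g).count c = #{i ∈ Ico u v | g i = c} := by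
  rw [Nat.Ico_eq_range', List.count_eq_countP, List.countP_map, List.countP_eq_length_filter]
  rfl

lemma IsConflictFreeOn.mono {g : ℕ → ℕ} {a b a' b' : ℕ} (hg : IsConflictFreeOn g a b)
    (ha : a ≤ a') (hb : b' ≤ b) : IsConflictFreeOn g a' b' :=
  fun u v hu huv hv => hg u v (ha.trans hu) huv (hv.trans hb)

theorem IsConflictFreeOn.sub_lt_two_pow {g : ℕ → ℕ} {a b : ℕ} (S : Finset ℕ)
    (hg : IsConflictFreeOn g a b) (hS : ∀ i ∈ Ico a b, g i ∈ S) : b - a < 2 ^ #S := by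
  induction S using Finset.strongInduction generalizing a b with
  | H S ih =>
    rcases le_or_gt b a with hba | hab
    · simp [Nat.sub_eq_zero_of_le hba]
    obtain ⟨c, hc⟩ := hg a b le_rfl hab le_rfl
    obtain ⟨j, hj⟩ := card_eq_one.1 hc
    have hj_mem : j ∈ Ico a b ∧ g j = c := mem_filter.1 (hj ▸ mem_singleton_self j)
    have hj_unique : ∀ i ∈ Ico a b, g i = c → i = j := fun i hi hgi =>
      mem_singleton.1 (hj ▸ mem_filter.2 ⟨hi, hgi⟩)
    have hcS : c ∈ S := hj_mem.2 ▸ hS j hj_mem.1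
    obtain ⟨haj, hjb⟩ := mem_Ico.1 hj_mem.1
    have hsub : ∀ a' b', a ≤ a' → b' ≤ b → j ∉ Ico a' b' → b' - a' < 2 ^ #(S.erase c) := by
      intro a' b' ha hb hj'
      refine ih _ (erase_ssubset hcS) (hg.mono ha hb) fun i hi => mem_erase.2 ⟨fun hgi => ?_, ?_⟩
      · exact hj' (hj_unique i (Ico_subset_Ico ha hb hi) hgi ▸ hi)
      · exact hS i (Ico_subset_Ico ha hb hi)
    have hleft := hsub a j le_rfl hjb.le (by simp)
    have hright := hsub (j + 1) b (haj.trans j.le_succ) le_rfl (by simp)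
    rw [← card_erase_add_one hcS, pow_succ]
    omega

local notation "ν" => padicValNat 2

lemma exists_padicValNat_two_lt_of_lt {x y : ℕ} (hx : x ≠ 0) (hxy : x < y) (h : ν x = ν y) :
    ∃ z, x < z ∧ z < y ∧ ν x < ν z := by
  obtain ⟨e, he⟩ : ∃ e, ν x = e := ⟨_, rfl⟩
  rw [he] at h ⊢
  obtain ⟨a, rfl⟩ : 2 ^ e ∣ x := he ▸ pow_padicValNat_dvd
  obtain ⟨b, rfl⟩ : 2 ^ e ∣ y := h ▸ pow_padicValNat_dvd
  have hodd : ∀ d, 2 ^ e * d ≠ 0 → ν (2 ^ e * d) = e → ¬ 2 ∣ d := by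
    intro d hd hd' h2
    apply pow_succ_padicValNat_not_dvd (p := 2) hd
    rw [hd', pow_succ]
    exact Nat.mul_dvd_mul_left _ h2
  have ha := hodd a hx he
  have hb := hodd b (by omega) h.symm
  have hab : a < b := Nat.lt_of_mul_lt_mul_left hxy
  refine ⟨2 ^ e * (a + 1), by gcongr; omega, by gcongr; omega, ?_⟩
  have hz : 2 ^ (e + 1) ∣ 2 ^ e * (a + 1) := pow_succ 2 e ▸ Nat.mul_dvd_mul_left _ (by omega)
  have := (padicValNat_dvd_iff_le (by positivity)).1 hz
  omega

theorem isConflictFreeOn_padicValNat_two_succ (a b : ℕ) :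
    IsConflictFreeOn (fun i => ν (i + 1)) a b := by
  intro u v _ huv _
  obtain ⟨j, hj, hmax⟩ := exists_max_image (Ico u v) (fun i => ν (i + 1)) ⟨u, by simp [huv]⟩
  have hsep : ∀ x ∈ Ico u v, ∀ y ∈ Ico u v, x < y → ν (x + 1) = ν (j + 1) →
      ν (y + 1) = ν (j + 1) → False := by
    intro x hx y hy hxy hxj hyj
    obtain ⟨z, hxz, hzy, hlt⟩ :=
      exists_padicValNat_two_lt_of_lt (by omega : x + 1 ≠ 0) (by omega) (hxj.trans hyj.symm)
    have hz : z - 1 ∈ Ico u v := by simp only [mem_Ico] at hx hy ⊢; omega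
    have := hmax _ hz
    rw [Nat.sub_add_cancel (by omega)] at this
    omega
  refine ⟨ν (j + 1), card_eq_one.2 ⟨j, eq_singleton_iff_unique_mem.2 ⟨by simp [hj], ?_⟩⟩⟩
  simp only [mem_filter, and_imp]
  intro i hi hij
  by_contra hne
  rcases lt_or_gt_of_ne hne with h | h
  · exact hsep i hi j hj h hij rfl
  · exact hsep j hj i hi h rfl hij

end ConflictFreeSequence

namespace SimpleGraph.pathGraph

lemma exists_eq_of_mem_edgeSet {m : ℕ} {e : Sym2 (Fin m)} (he : e ∈ (pathGraph m).edgeSet) :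
    ∃ i j : Fin m, i.val + 1 = j.val ∧ e = s(i, j) := by
  induction e with
  | _ a b =>
    rcases pathGraph_adj.1 he with h | h
    · exact ⟨a, b, h, rfl⟩
    · exact ⟨b, a, h, Sym2.eq_swap⟩

def edge (m : ℕ) (i : Fin (m - 1)) : (pathGraph m).edgeSet :=
  ⟨s(⟨i, by omega⟩, ⟨i + 1, by omega⟩), by simp [pathGraph_adj]⟩

lemma edge_bijective (m : ℕ) : Function.Bijective (edge m) := by
  refine ⟨fun i j hij => ?_, fun ⟨e, he⟩ => ?_⟩
  · simp only [edge, Subtype.mk.injEq, Sym2.eq_iff, Fin.ext_iff] at hij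
    exact Fin.ext (by omega)
  · obtain ⟨i, j, hij, rfl⟩ := exists_eq_of_mem_edgeSet he
    refine ⟨⟨i, by omega⟩, ?_⟩
    simp [edge, hij]

noncomputable def lineGIso (m : ℕ) : pathGraph (m - 1) ≃g lineG (pathGraph m) where
  toEquiv := Equiv.ofBijective _ (edge_bijective m)
  map_rel_iff' {i j} := by
    simp only [Equiv.ofBijective_apply, lineG, edge, pathGraph_adj, ne_eq, Subtype.mk.injEq,
      Sym2.eq_iff, Sym2.mem_iff, Fin.ext_iff]
    constructor
    · rintro ⟨hne, v, hv, hw⟩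
      omega
    · intro h
      exact ⟨by omega, ⟨max i j, by omega⟩, by simp; omega, by simp; omega⟩

lemma mem_support_of_le_of_le {m : ℕ} {u v x : Fin m} (p : (pathGraph m).Walk u v)
    (hux : u.val ≤ x.val) (hxv : x.val ≤ v.val) : x ∈ p.support := by
  induction p with
  | nil => exact Fin.ext (le_antisymm hxv hux) ▸ Walk.start_mem_support _
  | cons hadj q ih =>
    rcases hux.eq_or_lt with h | h
    · exact Fin.ext h ▸ Walk.start_mem_support _
    · exact List.mem_cons_of_mem _ (ih (by rw [pathGraph_adj] at hadj; omega) hxv)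

variable {m : ℕ} {c : Sym2 (Fin m) → ℕ} {g : ℕ → ℕ}

lemma map_edges_of_isPath (hg : ∀ a b : Fin m, a.val + 1 = b.val → c s(a, b) = g a)
    {u v : Fin m} (p : (pathGraph m).Walk u v) (hp : p.IsPath) (huv : u.val ≤ v.val) :
    p.edges.map c = (List.range' u (v - u)).map g := by
  induction p with
  | nil => simp
  | @cons a w b hadj q ih =>
    rw [Walk.cons_isPath_iff] at hp
    have hab : a.val < b.val := lt_of_le_of_ne huv fun h => hp.2 (Fin.ext h ▸ q.end_mem_support)
    have haw : a.val + 1 = w.val := by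
      rcases pathGraph_adj.1 hadj with h | h
      · exact h
      · exact absurd (mem_support_of_le_of_le q (by omega) hab.le) hp.2
    rw [Walk.edges_cons, List.map_cons, ih hp.1 (by omega), hg a w haw,
      show b.val - a.val = b.val - w.val + 1 by omega, List.range'_succ, List.map_cons, haw]

theorem isCFCColoring_iff (hg : ∀ a b : Fin m, a.val + 1 = b.val → c s(a, b) = g a) :
    IsCFCColoring (pathGraph m) c ↔ IsConflictFreeOn g 0 (m - 1) := by
  have hcount : ∀ {u v : Fin m} (p : (pathGraph m).Walk u v), p.IsPath → u.val ≤ v.val →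
      ∀ col, (p.edges.map c).count col = #{i ∈ Ico (u : ℕ) v | g i = col} := by
    intro u v p hp huv col
    rw [map_edges_of_isPath hg p hp huv, count_map_range'_eq_card_filter_Ico]
  constructor
  · intro hc u v _ huv hv
    obtain ⟨p, hp, col, hcol⟩ := hc ⟨u, by omega⟩ ⟨v, by omega⟩ (by simp [Fin.ext_iff]; omega)
    exact ⟨col, hcount p hp huv.le col ▸ hcol⟩
  · intro hcf u v huv
    wlog hlt : u < v generalizing u v
    · obtain ⟨p, hp, col, hcol⟩ := this v u huv.symm (lt_of_le_of_ne (not_lt.1 hlt) huv.symm)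
      exact ⟨p.reverse, hp.reverse, col,
        by rwa [Walk.edges_reverse, List.map_reverse, List.count_reverse]⟩
    obtain ⟨p⟩ := pathGraph_preconnected m u v
    obtain ⟨col, hcol⟩ := hcf u v (Nat.zero_le _) hlt (by omega)
    exact ⟨p.bypass, p.bypass_isPath, col, (hcount _ p.bypass_isPath hlt.le col).trans hcol⟩

lemma exists_isCFCColoring_lt_clog (m : ℕ) :
    ∃ c : Sym2 (Fin m) → ℕ,
      (∀ e ∈ (pathGraph m).edgeSet, c e < Nat.clog 2 m) ∧ IsCFCColoring (pathGraph m) c := by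
  have hg : ∀ a b : Fin m, a.val + 1 = b.val →
      padicValNat 2 ((Sym2.inf s(a, b)).val + 1) = padicValNat 2 (a + 1) := by
    intro a b hab
    rw [Sym2.inf_mk, inf_eq_left.2 (Fin.le_def.2 (by omega))]
  refine ⟨fun e => padicValNat 2 ((Sym2.inf e).val + 1), fun e he => ?_,
    (isCFCColoring_iff hg).2 (isConflictFreeOn_padicValNat_two_succ _ _)⟩
  obtain ⟨a, b, hab, rfl⟩ := exists_eq_of_mem_edgeSet he
  dsimp only
  rw [hg a b hab, Nat.lt_clog_iff_pow_lt one_lt_two]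
  exact (Nat.le_of_dvd a.val.succ_pos pow_padicValNat_dvd).trans_lt (by omega)

lemma clog_le_of_isCFCColoring {t : ℕ} (hlt : ∀ e ∈ (pathGraph m).edgeSet, c e < t)
    (hc : IsCFCColoring (pathGraph m) c) : Nat.clog 2 m ≤ t := by
  set g : ℕ → ℕ := fun i => if h : i + 1 < m then c s(⟨i, by omega⟩, ⟨i + 1, h⟩) else 0
  have hg : ∀ a b : Fin m, a.val + 1 = b.val → c s(a, b) = g a := by
    intro a b hab
    have h : a.val + 1 < m := hab ▸ b.2
    rw [show b = ⟨a + 1, h⟩ from Fin.ext hab.symm]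
    simp [g, h]
  have hS : ∀ i ∈ Ico 0 (m - 1), g i ∈ range t := by
    intro i hi
    have hi' : i + 1 < m := by simp only [mem_Ico] at hi; omega
    simpa [g, hi'] using hlt _ (by simp [pathGraph_adj])
  have := ((isCFCColoring_iff hg).1 hc).sub_lt_two_pow (range t) hS
  rw [card_range] at this
  exact Nat.clog_le_of_le_pow (by omega)

end SimpleGraph.pathGraph

theorem cfcNum_pathGraph (m : ℕ) : cfcNum (pathGraph m) = Nat.clog 2 m :=
  le_antisymm (Nat.sInf_le (pathGraph.exists_isCFCColoring_lt_clog m))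
    (le_csInf ⟨_, pathGraph.exists_isCFCColoring_lt_clog m⟩
      fun _ ⟨_, hlt, hc⟩ => pathGraph.clog_le_of_isCFCColoring hlt hc)

noncomputable def iterLinePathGraphIso (n : ℕ) :
    ∀ k, (iterLine (pathGraph n) k).2 ≃g pathGraph (n - k)
  | 0 => .refl
  | k + 1 => (iterLinePathGraphIso n k).lineG.trans (pathGraph.lineGIso (n - k)).symm

theorem stmt_17_general (n k : ℕ) :
    cfcNum (iterLine (SimpleGraph.pathGraph n) k).2 = Nat.clog 2 (n - k) :=
  (cfcNum_congr (iterLinePathGraphIso n k)).trans (cfcNum_pathGraph _)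

/-- cfc(L^k(P_n)) = ⌈log₂(n - k)⌉ for k < n - 1. -/
theorem stmt_17 (n k : ℕ) (hn : 2 ≤ n) (hk : k < n - 1) :
    cfcNum (iterLine (SimpleGraph.pathGraph n) k).2 = Nat.clog 2 (n - k) :=
  stmt_17_general n k
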